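/- arXiv:2309.16642 — 2 statements merged into one kernel-verified Lean document; each statement's English description precedes it below -/
import Mathlib

section
/- Let φ : [0,∞) → [0,1] be a C² solution of −φ'' = f(φ) with φ(0) = 0, φ' > 0, φ(+∞) = 1, where f is C¹ with f(1) = 0 and f'(1) < 0. Suppose ψ ∈ H¹(0,∞) is positive on (0,∞), ψ(0) = 0, and solves −ψ'' − f'(φ)ψ = λψ with both ψ and φ' decaying exponentially at infinity. Then λ ∫₀^∞ ψ φ' = ψ'(0) φ'(0) > 0, and hence λ > 0. -/
/-!
Differentiating `-φ'' = f(φ)` shows that `φ'` solves the linearized equation with eigenvalue `0`,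
so the Wronskian `W = φ'ψ' - φ''ψ` of `φ'` and `ψ` satisfies `W' = -λψφ'`. Exponential decay of
`ψ` and `φ'` (together with `φ'' = -f(φ) → -f(1) = 0`) makes `W` vanish at infinity, hence
`λ∫ψφ' = W(0) = ψ'(0)φ'(0)`. Finally `ψ'(0) > 0`: it is `≥ 0` since `ψ > 0` to the right of its
zero, and `ψ'(0) = 0` would force `ψ ≡ 0` by uniqueness for the linear ODE `ψ'' = qψ` with bounded
`q = -(f'(φ) + λ)`.
-/

open MeasureTheory Set Filter Topology Asymptotics Real

noncomputable def wronskian (u v : ℝ → ℝ) (x : ℝ) : ℝ := u x * deriv v x - deriv u x * v x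

theorem hasDerivAt_wronskian {u v : ℝ → ℝ} {u'' v'' x : ℝ}
    (hu : DifferentiableAt ℝ u x) (hv : DifferentiableAt ℝ v x)
    (hu' : HasDerivAt (deriv u) u'' x) (hv' : HasDerivAt (deriv v) v'' x) :
    HasDerivAt (wronskian u v) (u x * v'' - u'' * v x) x :=
  ((hu.hasDerivAt.mul hv').sub (hu'.mul hv.hasDerivAt)).congr_deriv (by ring)

theorem hasDerivAt_wronskian_deriv_of_linearized {f φ ψ : ℝ → ℝ} {lam x : ℝ}
    (hf : Differentiable ℝ f) (hφ : ContDiff ℝ 2 φ) (hψ : ContDiff ℝ 2 ψ)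
    (hφeq : ∀ᶠ y in 𝓝 x, -deriv (deriv φ) y = f (φ y))
    (hψeq : -deriv (deriv ψ) x - deriv f (φ x) * ψ x = lam * ψ x) :
    HasDerivAt (wronskian (deriv φ) ψ) (-(lam * (ψ x * deriv φ x))) x := by
  have hφ''' : HasDerivAt (deriv (deriv φ)) (-(deriv f (φ x) * deriv φ x)) x :=
    ((hf _).hasDerivAt.comp x (hφ.differentiable two_ne_zero x).hasDerivAt).neg
      |>.congr_of_eventuallyEq (hφeq.mono fun y hy => by simp [← hy])
  convert hasDerivAt_wronskian (hφ.differentiable_deriv_two x)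
    (hψ.differentiable two_ne_zero x) hφ''' (hψ.differentiable_deriv_two x).hasDerivAt using 1
  linear_combination deriv φ x * hψeq

theorem isBigO_exp_neg_of_abs_le {g : ℝ → ℝ} {C μ : ℝ}
    (h : ∀ x, 0 ≤ x → |g x| ≤ C * exp (-μ * x)) : g =O[atTop] fun x => exp (-μ * x) :=
  .of_bound C <| (eventually_ge_atTop 0).mono fun x hx => by
    simpa [abs_of_pos (exp_pos _)] using h x hx

theorem tendsto_zero_of_isBigO_exp_neg {g : ℝ → ℝ} {μ : ℝ} (hμ : 0 < μ)
    (h : g =O[atTop] fun x => exp (-μ * x)) : Tendsto g atTop (𝓝 0) :=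
  h.trans_tendsto <| tendsto_exp_atBot.comp <| tendsto_id.const_mul_atTop_of_neg (neg_neg_of_pos hμ)

theorem exists_tendsto_deriv_of_deriv_deriv_eq_mul {u q : ℝ → ℝ} {M μ : ℝ} (hu : ContDiff ℝ 2 u)
    (hμ : 0 < μ) (hq : ∀ x, 0 ≤ x → |q x| ≤ M) (heq : ∀ x, 0 ≤ x → deriv (deriv u) x = q x * u x)
    (huO : u =O[atTop] fun x => exp (-μ * x)) : ∃ L, Tendsto (deriv u) atTop (𝓝 L) := by
  have hqO : q =O[atTop] fun _ => (1 : ℝ) :=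
    .of_bound M <| (eventually_ge_atTop 0).mono fun x hx => by simpa using hq x hx
  have hu''O : deriv (deriv u) =O[atTop] fun x => exp (-μ * x) :=
    (hqO.mul huO).congr' ((eventually_ge_atTop 0).mono fun x hx => (heq x hx).symm) (by simp)
  have hu'' : Continuous (deriv (deriv u)) := (hu.deriv' (n := 1)).continuous_deriv_one
  exact ⟨_, tendsto_limUnder_of_hasDerivAt_of_integrableOn_Ioi (a := 0)
    (fun x _ => (hu.differentiable_deriv_two x).hasDerivAt)
    (integrable_of_isBigO_exp_neg hμ hu''.continuousOn hu''O)⟩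

theorem tendsto_deriv_deriv_atTop_zero {f φ : ℝ → ℝ} (hf : Continuous f) (hf1 : f 1 = 0)
    (hφeq : ∀ x, 0 ≤ x → -deriv (deriv φ) x = f (φ x)) (hφlim : Tendsto φ atTop (𝓝 1)) :
    Tendsto (deriv (deriv φ)) atTop (𝓝 0) := by
  have h := ((hf.tendsto 1).comp hφlim).neg
  rw [hf1, neg_zero] at h
  exact h.congr' <| (eventually_ge_atTop 0).mono fun x hx => by simp [← hφeq x hx]

theorem mul_integral_eq_of_tendsto_wronskian {f φ ψ : ℝ → ℝ} {lam : ℝ}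
    (hf : Differentiable ℝ f) (hφ : ContDiff ℝ 2 φ) (hψ : ContDiff ℝ 2 ψ) (hψ0 : ψ 0 = 0)
    (hφeq : ∀ x, 0 ≤ x → -deriv (deriv φ) x = f (φ x))
    (hψeq : ∀ x, 0 ≤ x → -deriv (deriv ψ) x - deriv f (φ x) * ψ x = lam * ψ x)
    (hint : IntegrableOn (fun x => ψ x * deriv φ x) (Ioi 0))
    (hW : Tendsto (wronskian (deriv φ) ψ) atTop (𝓝 0)) :
    lam * ∫ x in Ioi 0, ψ x * deriv φ x = deriv ψ 0 * deriv φ 0 := by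
  have hWcont : Continuous (wronskian (deriv φ) ψ) :=
    ((hφ.continuous_deriv one_le_two).mul (hψ.continuous_deriv one_le_two)).sub
      ((hφ.deriv' (n := 1)).continuous_deriv_one.mul hψ.continuous)
  have h := integral_Ioi_of_hasDerivAt_of_tendsto hWcont.continuousWithinAt
    (fun x hx => hasDerivAt_wronskian_deriv_of_linearized hf hφ hψ
      (mem_of_superset (Ioi_mem_nhds hx) fun y hy => hφeq y (le_of_lt hy))
      (hψeq x (le_of_lt hx)))
    (hint.const_mul lam).neg hW
  rw [integral_neg, integral_const_mul] at h
  simp only [wronskian, hψ0, mul_zero, sub_zero, zero_sub, neg_inj] at h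
  rw [h, mul_comm]

theorem deriv_nonneg_of_eq_zero_of_pos_right {u : ℝ → ℝ} {a : ℝ} (hu : DifferentiableAt ℝ u a)
    (ha : u a = 0) (hpos : ∀ x, a < x → 0 < u x) : 0 ≤ deriv u a := by
  have h := (hasDerivWithinAt_iff_tendsto_slope' (show a ∉ Ioi a from lt_irrefl a)).1
    hu.hasDerivAt.hasDerivWithinAt
  refine ge_of_tendsto h (eventually_nhdsWithin_of_forall fun x (hx : a < x) => ?_)
  rw [slope_def_field, ha, sub_zero]
  exact div_nonneg (hpos x hx).le (sub_nonneg.2 hx.le)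

theorem eq_zero_of_deriv_deriv_eq_mul {u q : ℝ → ℝ} {M a b : ℝ} (hu : Differentiable ℝ u)
    (hu' : Differentiable ℝ (deriv u)) (hq : ∀ x ∈ Ico a b, |q x| ≤ M)
    (heq : ∀ x ∈ Ico a b, deriv (deriv u) x = q x * u x) (ha : u a = 0) (ha' : deriv u a = 0) :
    ∀ x ∈ Icc a b, u x = 0 := by
  have h := eq_zero_of_abs_deriv_le_mul_abs_self_of_eq_zero_right (K := max M 1) (a := a) (b := b)
    (f := fun x => (u x, deriv u x)) (f' := fun x => (deriv u x, deriv (deriv u) x))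
    (hu.continuous.prodMk hu'.continuous).continuousOn
    (fun x _ => ((hu x).hasDerivAt.prodMk (hu' x).hasDerivAt).hasDerivWithinAt)
    (by simp [ha, ha']) fun x hx => by
      simp only [Prod.norm_def, Real.norm_eq_abs, heq x hx, abs_mul]
      refine max_le ?_ ?_
      · exact (le_max_right _ _).trans (le_mul_of_one_le_left (by positivity) (le_max_right _ _))
      · exact mul_le_mul ((hq x hx).trans (le_max_left _ _)) (le_max_left _ _) (abs_nonneg _)
          (zero_le_one.trans (le_max_right _ _))
  exact fun x hx => congrArg Prod.fst (h x hx)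

theorem deriv_pos_of_deriv_deriv_eq_mul {u q : ℝ → ℝ} {M : ℝ} (hu : Differentiable ℝ u)
    (hu' : Differentiable ℝ (deriv u)) (hq : ∀ x, 0 ≤ x → |q x| ≤ M)
    (heq : ∀ x, 0 ≤ x → deriv (deriv u) x = q x * u x) (h0 : u 0 = 0)
    (hpos : ∀ x, 0 < x → 0 < u x) : 0 < deriv u 0 := by
  refine (deriv_nonneg_of_eq_zero_of_pos_right (hu 0) h0 hpos).lt_of_ne fun h => ?_
  have := eq_zero_of_deriv_deriv_eq_mul (b := 1) hu hu' (fun x hx => hq x hx.1)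
    (fun x hx => heq x hx.1) h0 h.symm 1 ⟨zero_le_one, le_rfl⟩
  exact (hpos 1 one_pos).ne' this

theorem setIntegral_Ioi_pos {g : ℝ → ℝ} {a : ℝ} (hint : IntegrableOn g (Ioi a))
    (hpos : ∀ x, a < x → 0 < g x) : 0 < ∫ x in Ioi a, g x := by
  rw [setIntegral_pos_iff_support_of_nonneg_ae
    ((ae_restrict_iff' measurableSet_Ioi).2 (ae_of_all _ fun x hx => (hpos x hx).le)) hint,
    inter_eq_right.2 fun x (hx : x ∈ Ioi a) => Function.mem_support.2 (hpos x hx).ne']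
  simp

theorem stmt_4_general (f φ ψ : ℝ → ℝ) (lam : ℝ)
    (hfC1 : ContDiff ℝ 1 f) (hf1 : f 1 = 0)
    (hφC2 : ContDiff ℝ 2 φ)
    (hφrange : ∀ x, 0 ≤ x → φ x ∈ Set.Icc (0 : ℝ) 1)
    (hφeq : ∀ x, 0 ≤ x → -(deriv (deriv φ) x) = f (φ x))
    (hφ' : ∀ x, 0 ≤ x → 0 < deriv φ x)
    (hφlim : Filter.Tendsto φ Filter.atTop (nhds 1))
    (hψC2 : ContDiff ℝ 2 ψ) (hψ0 : ψ 0 = 0)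
    (hψpos : ∀ x, 0 < x → 0 < ψ x)
    (hψeq : ∀ x, 0 ≤ x → -(deriv (deriv ψ) x) - deriv f (φ x) * ψ x = lam * ψ x)
    (hdecay : ∃ C μ : ℝ, 0 < C ∧ 0 < μ ∧ ∀ x, 0 ≤ x →
      |ψ x| ≤ C * Real.exp (-μ * x) ∧ |deriv φ x| ≤ C * Real.exp (-μ * x)) :
    lam * ∫ x in Set.Ioi (0 : ℝ), ψ x * deriv φ x = deriv ψ 0 * deriv φ 0 ∧
    0 < deriv ψ 0 * deriv φ 0 ∧ 0 < lam := by
  obtain ⟨C, μ, -, hμ, hdecay⟩ := hdecay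
  obtain ⟨M, hM⟩ := isCompact_Icc.exists_bound_of_continuousOn hfC1.continuous_deriv_one.continuousOn
  set q : ℝ → ℝ := fun x => -(deriv f (φ x) + lam)
  have hq : ∀ x, 0 ≤ x → |q x| ≤ M + |lam| := fun x hx => by
    simpa only [q, abs_neg] using (abs_add_le _ _).trans (add_le_add (hM _ (hφrange x hx)) le_rfl)
  have hψ'' : ∀ x, 0 ≤ x → deriv (deriv ψ) x = q x * ψ x := fun x hx => by
    linear_combination -hψeq x hx
  have hψO := isBigO_exp_neg_of_abs_le fun x hx => (hdecay x hx).1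
  have hφ'O := isBigO_exp_neg_of_abs_le fun x hx => (hdecay x hx).2
  have hφ'lim := tendsto_zero_of_isBigO_exp_neg hμ hφ'O
  obtain ⟨L, hψ'lim⟩ := exists_tendsto_deriv_of_deriv_deriv_eq_mul hψC2 hμ hq hψ'' hψO
  have hint : IntegrableOn (fun x => ψ x * deriv φ x) (Ioi 0) :=
    integrable_of_isBigO_exp_neg hμ
      (hψC2.continuous.mul (hφC2.continuous_deriv one_le_two)).continuousOn
      (by simpa using hψO.mul (hφ'lim.isBigO_one ℝ))
  have hW : Tendsto (wronskian (deriv φ) ψ) atTop (𝓝 0) := by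
    have h := (hφ'lim.mul hψ'lim).sub ((tendsto_deriv_deriv_atTop_zero hfC1.continuous hf1
      hφeq hφlim).mul (tendsto_zero_of_isBigO_exp_neg hμ hψO))
    rwa [zero_mul, zero_mul, sub_zero] at h
  have hkey := mul_integral_eq_of_tendsto_wronskian (hfC1.differentiable one_ne_zero) hφC2 hψC2
    hψ0 hφeq hψeq hint hW
  have hpos : 0 < deriv ψ 0 * deriv φ 0 :=
    mul_pos (deriv_pos_of_deriv_deriv_eq_mul (hψC2.differentiable two_ne_zero)
      hψC2.differentiable_deriv_two hq hψ'' hψ0 hψpos) (hφ' 0 le_rfl)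
  refine ⟨hkey, hpos, (pos_iff_pos_of_mul_pos (hkey ▸ hpos)).2 ?_⟩
  exact setIntegral_Ioi_pos hint fun x hx => mul_pos (hψpos x hx) (hφ' x hx.le)

/-- Let `φ : [0,∞) → [0,1]` be a `C²` solution of `−φ'' = f(φ)` with
`φ(0) = 0`, `φ' > 0`, `φ(+∞) = 1`, where `f` is `C¹` with `f(1) = 0`, `f'(1) < 0`.
Suppose `ψ ∈ H¹(0,∞)` is positive on `(0,∞)`, `ψ(0) = 0`, solves `−ψ'' − f'(φ)ψ = λψ`,
and both `ψ` and `φ'` decay exponentially at infinity.  Then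
`λ ∫₀^∞ ψ φ' = ψ'(0) φ'(0) > 0`, hence `λ > 0`. -/
theorem stmt_4 (f φ ψ : ℝ → ℝ) (lam : ℝ)
    (hfC1 : ContDiff ℝ 1 f) (hf1 : f 1 = 0) (hf1' : deriv f 1 < 0)
    (hφC2 : ContDiff ℝ 2 φ) (hφ0 : φ 0 = 0)
    (hφrange : ∀ x, 0 ≤ x → φ x ∈ Set.Icc (0 : ℝ) 1)
    (hφeq : ∀ x, 0 ≤ x → -(deriv (deriv φ) x) = f (φ x))
    (hφ' : ∀ x, 0 ≤ x → 0 < deriv φ x)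
    (hφlim : Filter.Tendsto φ Filter.atTop (nhds 1))
    (hψC2 : ContDiff ℝ 2 ψ) (hψ0 : ψ 0 = 0)
    (hψpos : ∀ x, 0 < x → 0 < ψ x)
    (hψeq : ∀ x, 0 ≤ x → -(deriv (deriv ψ) x) - deriv f (φ x) * ψ x = lam * ψ x)
    (hψH1 : MemLp ψ 2 (volume.restrict (Set.Ioi (0 : ℝ))) ∧
      MemLp (deriv ψ) 2 (volume.restrict (Set.Ioi (0 : ℝ))))
    (hdecay : ∃ C μ : ℝ, 0 < C ∧ 0 < μ ∧ ∀ x, 0 ≤ x →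
      |ψ x| ≤ C * Real.exp (-μ * x) ∧ |deriv φ x| ≤ C * Real.exp (-μ * x)) :
    lam * ∫ x in Set.Ioi (0 : ℝ), ψ x * deriv φ x = deriv ψ 0 * deriv φ 0 ∧
    0 < deriv ψ 0 * deriv φ 0 ∧ 0 < lam :=
  stmt_4_general f φ ψ lam hfC1 hf1 hφC2 hφrange hφeq hφ' hφlim hψC2 hψ0 hψpos hψeq hdecay
end

section
/- Let φ solve −φ'' = f(φ) on [0,∞) with φ(0) = 0, φ strictly increasing, φ(+∞) = 1, where f is C¹ with f(1) = 0 and f'(1) < 0. Then 1 − φ(x) decays exponentially as x → ∞: there exist C, μ > 0 with 1 − φ(x) ≤ C e^{−μx}. -/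
open Set Filter Real Topology

/-!
Put `w = 1 - φ`. Since `f'(1) < 0`, near `s = 1` we have `f s ≥ μ² (1 - s)` with
`μ² = -f'(1) / 2`, so on some half-line `[X, ∞)` the function `w` satisfies `w'' ≥ μ² w`, while
`w' ≤ 0` because `φ` increases. Then `v = w' + μ w` satisfies `v' ≥ μ v`, so `v e^{-μx}` is
nondecreasing; since `v ≤ μ w` is bounded above, this forces `v ≤ 0`, i.e. `w e^{μx}` is
nonincreasing on `[X, ∞)`.
-/

lemma eventually_mul_sub_lt_of_hasDerivAt {f : ℝ → ℝ} {f' c x₀ : ℝ} (hf : HasDerivAt f f' x₀)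
    (hf₀ : f x₀ = 0) (hc : c < -f') : ∀ᶠ s in 𝓝[<] x₀, c * (x₀ - s) < f s := by
  have hslope : ∀ᶠ s in 𝓝[<] x₀, slope f x₀ s < -c :=
    ((hasDerivAt_iff_tendsto_slope.1 hf).mono_left (nhdsLT_le_nhdsNE x₀)).eventually
      (gt_mem_nhds (by linarith))
  filter_upwards [hslope, self_mem_nhdsWithin] with s hs hlt
  rw [slope_def_field, hf₀, sub_zero, div_lt_iff_of_neg (sub_neg.2 hlt)] at hs
  linarith

lemma nonpos_of_mul_le_deriv_of_le {v v' : ℝ → ℝ} {μ B a : ℝ} (hμ : 0 < μ)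
    (hv : ∀ x, a ≤ x → HasDerivAt v (v' x) x) (hv' : ∀ x, a ≤ x → μ * v x ≤ v' x)
    (hB : ∀ x, a ≤ x → v x ≤ B) : v a ≤ 0 := by
  have hg : ∀ x, a ≤ x →
      HasDerivAt (fun x ↦ v x * exp (-μ * x)) ((v' x - μ * v x) * exp (-μ * x)) x :=
    fun x hx ↦ ((hv x hx).mul ((hasDerivAt_id' x).const_mul (-μ)).exp).congr_deriv (by ring)
  have hmono : MonotoneOn (fun x ↦ v x * exp (-μ * x)) (Ici a) :=
    monotoneOn_of_hasDerivWithinAt_nonneg (convex_Ici a)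
      (fun x hx ↦ (hg x hx).continuousAt.continuousWithinAt)
      (fun x hx ↦ (hg x (interior_subset hx)).hasDerivWithinAt)
      fun x hx ↦ mul_nonneg (sub_nonneg.2 (hv' x (interior_subset hx))) (exp_pos _).le
  have hlim : Tendsto (fun x ↦ B * exp (-μ * x)) atTop (𝓝 0) := by
    simpa using (tendsto_exp_atBot.comp
      (tendsto_id.const_mul_atTop_of_neg (neg_lt_zero.2 hμ))).const_mul B
  have hga : v a * exp (-μ * a) ≤ 0 := by
    refine ge_of_tendsto hlim (eventually_atTop.2 ⟨a, fun x hx ↦ ?_⟩)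
    exact (hmono self_mem_Ici hx hx).trans
      (mul_le_mul_of_nonneg_right (hB x hx) (exp_pos _).le)
  exact nonpos_of_mul_nonpos_left hga (exp_pos _)

theorem le_mul_exp_of_sq_mul_le_deriv2 {w w' w'' : ℝ → ℝ} {μ X : ℝ} (hμ : 0 < μ)
    (hw : ∀ x, X ≤ x → HasDerivAt w (w' x) x) (hw' : ∀ x, X ≤ x → HasDerivAt w' (w'' x) x)
    (hw'_nonpos : ∀ x, X ≤ x → w' x ≤ 0) (hw'' : ∀ x, X ≤ x → μ ^ 2 * w x ≤ w'' x) :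
    ∀ x, X ≤ x → w x ≤ w X * exp (-μ * (x - X)) := by
  have hanti : AntitoneOn w (Ici X) :=
    antitoneOn_of_hasDerivWithinAt_nonpos (convex_Ici X)
      (fun x hx ↦ (hw x hx).continuousAt.continuousWithinAt)
      (fun x hx ↦ (hw x (interior_subset hx)).hasDerivWithinAt)
      fun x hx ↦ hw'_nonpos x (interior_subset hx)
  have hv : ∀ x₀, X ≤ x₀ → w' x₀ + μ * w x₀ ≤ 0 := by
    intro x₀ hx₀
    refine nonpos_of_mul_le_deriv_of_le (v := fun x ↦ w' x + μ * w x)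
      (v' := fun x ↦ w'' x + μ * w' x) (B := μ * w X) hμ
      (fun x hx ↦ (hw' x (hx₀.trans hx)).add ((hw x (hx₀.trans hx)).const_mul μ))
      (fun x hx ↦ ?_) (fun x hx ↦ ?_)
    · linarith [hw'' x (hx₀.trans hx)]
    · have hwx : w x ≤ w X := hanti self_mem_Ici (hx₀.trans hx) (hx₀.trans hx)
      nlinarith [hw'_nonpos x (hx₀.trans hx)]
  have hdecr : AntitoneOn (fun x ↦ w x * exp (μ * x)) (Ici X) := by
    have hd : ∀ x, X ≤ x →
        HasDerivAt (fun x ↦ w x * exp (μ * x)) ((w' x + μ * w x) * exp (μ * x)) x :=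
      fun x hx ↦ ((hw x hx).mul ((hasDerivAt_id' x).const_mul μ).exp).congr_deriv (by ring)
    exact antitoneOn_of_hasDerivWithinAt_nonpos (convex_Ici X)
      (fun x hx ↦ (hd x hx).continuousAt.continuousWithinAt)
      (fun x hx ↦ (hd x (interior_subset hx)).hasDerivWithinAt)
      fun x hx ↦ mul_nonpos_of_nonpos_of_nonneg (hv x (interior_subset hx)) (exp_pos _).le
  intro x hx
  rw [show -μ * (x - X) = μ * X - μ * x by ring, exp_sub, ← mul_div_assoc,
    le_div_iff₀ (exp_pos _)]
  exact hdecr self_mem_Ici hx hx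

lemma le_exp_mul_exp_of_le_mul_exp {w : ℝ → ℝ} {μ X : ℝ} (hμ : 0 ≤ μ) (hX : 0 ≤ X)
    (hw : ∀ x, 0 ≤ x → w x ≤ 1) (hdecay : ∀ x, X ≤ x → w x ≤ w X * exp (-μ * (x - X))) :
    ∀ x, 0 ≤ x → w x ≤ exp (μ * X) * exp (-μ * x) := by
  intro x hx
  rw [← exp_add]
  rcases le_total X x with hXx | hxX
  · calc w x ≤ w X * exp (-μ * (x - X)) := hdecay x hXx
      _ ≤ 1 * exp (-μ * (x - X)) := mul_le_mul_of_nonneg_right (hw X hX) (exp_pos _).le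
      _ = exp (μ * X + -μ * x) := by ring_nf
  · calc w x ≤ 1 := hw x hx
      _ ≤ exp (μ * X + -μ * x) := one_le_exp (by nlinarith)

theorem stmt_5_general (f φ : ℝ → ℝ)
    (hfC1 : ContDiff ℝ 1 f) (hf1 : f 1 = 0) (hf1' : deriv f 1 < 0)
    (hφC2 : ContDiff ℝ 2 φ)
    (hφrange : ∀ x, 0 ≤ x → φ x ∈ Set.Ico (0 : ℝ) 1)
    (hφmono : StrictMonoOn φ (Set.Ici (0 : ℝ)))
    (hφeq : ∀ x, 0 ≤ x → -(deriv (deriv φ) x) = f (φ x))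
    (hφlim : Filter.Tendsto φ Filter.atTop (nhds 1)) :
    ∃ C μ : ℝ, 0 < C ∧ 0 < μ ∧ ∀ x, 0 ≤ x → 1 - φ x ≤ C * Real.exp (-μ * x) := by
  set μ := √(-deriv f 1 / 2)
  have hμ : 0 < μ := sqrt_pos.2 (by linarith)
  have hμ2 : μ ^ 2 < -deriv f 1 := by rw [sq_sqrt (by linarith)]; linarith
  have hφ' : ∀ x, HasDerivAt φ (deriv φ x) x :=
    fun x ↦ (hφC2.differentiable two_ne_zero x).hasDerivAt
  have hφ'' : ∀ x, HasDerivAt (deriv φ) (deriv (deriv φ) x) x :=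
    fun x ↦ ((hφC2.deriv' (n := 1)).differentiable one_ne_zero x).hasDerivAt
  have hφ_below : Tendsto φ atTop (𝓝[<] 1) :=
    tendsto_nhdsWithin_of_tendsto_nhds_of_eventually_within _ hφlim
      (eventually_atTop.2 ⟨0, fun x hx ↦ (hφrange x hx).2⟩)
  obtain ⟨X, hX⟩ := ((hφ_below.eventually (eventually_mul_sub_lt_of_hasDerivAt
    (hfC1.differentiable one_ne_zero 1).hasDerivAt hf1 hμ2)).and
    (eventually_ge_atTop 0)).exists_forall_of_atTop
  have hdecay := le_mul_exp_of_sq_mul_le_deriv2 (w := fun x ↦ 1 - φ x) hμ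
    (fun x _ ↦ (hφ' x).const_sub 1) (fun x _ ↦ (hφ'' x).neg)
    (fun x hx ↦ by
      rw [neg_nonpos, ← (hφ' x).hasDerivWithinAt.derivWithin (uniqueDiffOn_Ici 0 x (hX x hx).2)]
      exact hφmono.monotoneOn.derivWithin_nonneg)
    (fun x hx ↦ by rw [hφeq x (hX x hx).2]; exact (hX x hx).1.le)
  exact ⟨exp (μ * X), μ, exp_pos _, hμ, le_exp_mul_exp_of_le_mul_exp hμ.le (hX X le_rfl).2
    (fun x hx ↦ by linarith [(hφrange x hx).1]) hdecay⟩

/-- Let `φ` solve `−φ'' = f(φ)` on `[0,∞)` with `φ(0) = 0`, `φ` strictly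
increasing, `φ(+∞) = 1`, where `f` is `C¹` with `f(1) = 0` and `f'(1) < 0`.  Then
`1 − φ(x)` decays exponentially: there exist `C, μ > 0` with `1 − φ(x) ≤ C e^{−μx}`. -/
theorem stmt_5 (f φ : ℝ → ℝ)
    (hfC1 : ContDiff ℝ 1 f) (hf1 : f 1 = 0) (hf1' : deriv f 1 < 0)
    (hφC2 : ContDiff ℝ 2 φ) (hφ0 : φ 0 = 0)
    (hφrange : ∀ x, 0 ≤ x → φ x ∈ Set.Ico (0 : ℝ) 1)
    (hφmono : StrictMonoOn φ (Set.Ici (0 : ℝ)))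
    (hφeq : ∀ x, 0 ≤ x → -(deriv (deriv φ) x) = f (φ x))
    (hφlim : Filter.Tendsto φ Filter.atTop (nhds 1)) :
    ∃ C μ : ℝ, 0 < C ∧ 0 < μ ∧ ∀ x, 0 ≤ x → 1 - φ x ≤ C * Real.exp (-μ * x) :=
  stmt_5_general f φ hfC1 hf1 hf1' hφC2 hφrange hφmono hφeq hφlim
end
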